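/- Let ℙ⁻ be a Markov measure on Σ_k with transition matrix Q and positive stationary vector p̄. Let W = [ξ_0…ξ_{N-1}] be a cylinder with ℙ⁻(W) > 0 and suppose ρ := inf_j q_{j ξ_0} q_{ξ_0 ξ_1} ⋯ q_{ξ_{N-2} ξ_{N-1}} > 0. Set ρ_0 = min{ρ, ℙ⁻(W)} and λ_0 = 1 − ρ_0 ∈ (0,1). Then for every ℓ ≥ 1, ℙ⁻(Σ_ℓ^W) ≤ λ_0^ℓ, where Σ_ℓ^W = {ω : σ^{iN}(ω) ∉ W for all 0 ≤ i ≤ ℓ−1}. -/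

import Mathlib

open MeasureTheory

/-- `chainW Q c [d₀,…,d_n] = Q c d₀ * Q d₀ d₁ * ⋯`. -/
def chainW {k : ℕ} (Q : Matrix (Fin k) (Fin k) ℝ) : Fin k → List (Fin k) → ℝ
  | _, [] => 1
  | c, d :: t => Q c d * chainW Q d t

/-- The Markov weight of a cylinder word. -/
def cylW {k : ℕ} (p : Fin k → ℝ) (Q : Matrix (Fin k) (Fin k) ℝ) : List (Fin k) → ℝ
  | [] => 1
  | c :: t => p c * chainW Q c t

/-- The cylinder of a finite word. -/
def cylL {k : ℕ} (w : List (Fin k)) : Set (ℕ → Fin k) :=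
  {ω | ∀ (i : ℕ) (h : i < w.length), ω i = w.get ⟨i, h⟩}

/-- The shift map on `Σ_k`. -/
def shift {k : ℕ} (ω : ℕ → Fin k) : ℕ → Fin k := fun n => ω (n + 1)

/-!
The set `Σ_m^W` is determined by the first `mN` symbols, so it is a disjoint union of cylinders
`[u]` of length `mN`. For each of them the Markov weights give
`ℙ⁻([u] ∩ σ^{-mN} W) = ℙ⁻([uξ]) = ℙ⁻([u]) · q_{u_last ξ₀} q_{ξ₀ξ₁} ⋯ ≥ ρ ℙ⁻([u])`
(and `ℙ⁻(W)` itself when `m = 0`), so removing `σ^{-mN} W` keeps at most a fraction `1 - ρ₀`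
of the mass: `ℙ⁻(Σ_{m+1}^W) ≤ (1 - ρ₀) ℙ⁻(Σ_m^W)`.
-/

namespace MarkovCylinder

variable {k : ℕ}

section Weights

variable {Q : Matrix (Fin k) (Fin k) ℝ} {p : Fin k → ℝ}

lemma chainW_nonneg (hQ : ∀ i j, 0 ≤ Q i j) (c : Fin k) (t : List (Fin k)) :
    0 ≤ chainW Q c t := by
  induction t generalizing c with
  | nil => exact zero_le_one
  | cons d t ih => exact mul_nonneg (hQ c d) (ih d)

lemma cylW_nonneg (hQ : ∀ i j, 0 ≤ Q i j) (hp : ∀ i, 0 ≤ p i) (w : List (Fin k)) :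
    0 ≤ cylW p Q w := by
  cases w with
  | nil => exact zero_le_one
  | cons c t => exact mul_nonneg (hp c) (chainW_nonneg hQ c t)

lemma chainW_append (c : Fin k) (t v : List (Fin k)) :
    chainW Q c (t ++ v) =
      chainW Q c t * chainW Q ((c :: t).getLast (List.cons_ne_nil c t)) v := by
  induction t generalizing c with
  | nil => simp [chainW]
  | cons d t ih =>
    simp only [List.cons_append, chainW, ih d, List.getLast_cons (List.cons_ne_nil d t)]
    ring

lemma min_mul_cylW_le_cylW_append (hQ : ∀ i j, 0 ≤ Q i j) (hp : ∀ i, 0 ≤ p i) {ρ : ℝ}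
    {v : List (Fin k)} (hρ : ∀ c, ρ ≤ chainW Q c v) (u : List (Fin k)) :
    min ρ (cylW p Q v) * cylW p Q u ≤ cylW p Q (u ++ v) := by
  cases u with
  | nil => simp [cylW]
  | cons c t =>
    have hu := cylW_nonneg hQ hp (c :: t)
    calc min ρ (cylW p Q v) * cylW p Q (c :: t)
        ≤ chainW Q ((c :: t).getLast (List.cons_ne_nil c t)) v * cylW p Q (c :: t) :=
          mul_le_mul_of_nonneg_right ((min_le_left _ _).trans (hρ _)) hu
      _ = cylW p Q (c :: t ++ v) := by
          simp only [List.cons_append, cylW, chainW_append]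
          ring

end Weights

lemma shift_iterate_apply (m : ℕ) (ω : ℕ → Fin k) (n : ℕ) : shift^[m] ω n = ω (n + m) := by
  induction m generalizing ω with
  | zero => rfl
  | succ m ih => rw [Function.iterate_succ_apply, ih]; rfl

lemma measurable_shift : Measurable (shift : (ℕ → Fin k) → ℕ → Fin k) :=
  measurable_pi_lambda _ fun n => measurable_pi_apply (n + 1)

lemma measurableSet_cylL (w : List (Fin k)) : MeasurableSet (cylL w) := by
  have : cylL w = ⋂ i : Fin w.length, (fun ω : ℕ → Fin k => ω i) ⁻¹' {w.get i} := by
    ext ω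
    simp [cylL, Fin.forall_iff]
  rw [this]
  exact .iInter fun i => measurable_pi_apply _ (measurableSet_singleton _)

lemma cylL_append (u v : List (Fin k)) :
    cylL (u ++ v) = cylL u ∩ shift^[u.length] ⁻¹' cylL v := by
  ext ω
  simp only [cylL, Set.mem_inter_iff, Set.mem_preimage, Set.mem_ofPred_eq, shift_iterate_apply,
    List.length_append, List.get_eq_getElem]
  constructor
  · intro h
    refine ⟨fun i hi => by simpa [List.getElem_append_left hi] using h i (by omega),
      fun j hj => ?_⟩
    simpa [List.getElem_append_right, Nat.add_comm] using h (u.length + j) (by omega)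
  · rintro ⟨hu, hv⟩ i hi
    by_cases hiu : i < u.length
    · simpa [List.getElem_append_left hiu] using hu i hiu
    · have := hv (i - u.length) (by omega)
      rw [Nat.sub_add_cancel (by omega)] at this
      rw [this, List.getElem_append_right (by omega)]

lemma dependsOn_mem_preimage_cylL (j : ℕ) (w : List (Fin k)) :
    DependsOn (· ∈ shift^[j] ⁻¹' cylL w) (Set.Iio (j + w.length)) := by
  intro ω ω' h
  simp only [Set.mem_preimage, cylL, Set.mem_ofPred_eq, shift_iterate_apply]
  refine forall_congr fun i => forall_congr fun hi => ?_
  rw [h (i + j) (by simp only [Set.mem_Iio]; omega)]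

lemma mem_cylL_ofFn_self {n : ℕ} (ω : ℕ → Fin k) :
    ω ∈ cylL (List.ofFn fun i : Fin n => ω i) := by
  intro i hi
  simp

lemma pairwiseDisjoint_cylL_ofFn (n : ℕ) :
    (Set.univ : Set (Fin n → Fin k)).PairwiseDisjoint fun u => cylL (List.ofFn u) := by
  intro u _ u' _ hne
  refine Set.disjoint_left.mpr fun ω hω hω' => hne (funext fun i => ?_)
  simpa using (hω i (by simp)).symm.trans (hω' i (by simp))

lemma measureReal_eq_sum_inter_cylL (μ : Measure (ℕ → Fin k)) [IsFiniteMeasure μ]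
    {S : Set (ℕ → Fin k)} (hS : MeasurableSet S) (n : ℕ) :
    μ.real S = ∑ u : Fin n → Fin k, μ.real (S ∩ cylL (List.ofFn u)) := by
  have hcover : S = ⋃ u ∈ (Finset.univ : Finset (Fin n → Fin k)), S ∩ cylL (List.ofFn u) := by
    ext ω
    simp only [Set.mem_iUnion, Set.mem_inter_iff, Finset.mem_univ, exists_true_left]
    exact ⟨fun h => ⟨fun i => ω i, h, mem_cylL_ofFn_self ω⟩, fun ⟨_, h, _⟩ => h⟩
  conv_lhs => rw [hcover]
  refine measureReal_biUnion_finset (fun u _ u' _ hne => ?_)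
    fun u _ => hS.inter (measurableSet_cylL _)
  exact ((pairwiseDisjoint_cylL_ofFn n) (Set.mem_univ u) (Set.mem_univ u') hne).mono
    Set.inter_subset_right Set.inter_subset_right

lemma cylL_ofFn_subset_or_inter_eq_empty {n : ℕ} {A : Set (ℕ → Fin k)}
    (hA : DependsOn (· ∈ A) (Set.Iio n)) (u : Fin n → Fin k) :
    cylL (List.ofFn u) ⊆ A ∨ A ∩ cylL (List.ofFn u) = ∅ := by
  refine or_iff_not_imp_right.mpr fun hne => ?_
  obtain ⟨ω, hωA, hωu⟩ := Set.nonempty_iff_ne_empty.mpr hne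
  intro ω' hω'u
  refine (hA fun i hi => ?_).mp hωA
  have hi : i < (List.ofFn u).length := by simpa using hi
  exact (hωu i hi).trans (hω'u i hi).symm

lemma mul_measureReal_le_measureReal_inter (μ : Measure (ℕ → Fin k)) [IsFiniteMeasure μ]
    {n : ℕ} {A B : Set (ℕ → Fin k)} (hA : MeasurableSet A) (hAn : DependsOn (· ∈ A) (Set.Iio n))
    (hB : MeasurableSet B) {c : ℝ}
    (hc : ∀ u : Fin n → Fin k, c * μ.real (cylL (List.ofFn u)) ≤ μ.real (cylL (List.ofFn u) ∩ B)) :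
    c * μ.real A ≤ μ.real (A ∩ B) := by
  rw [measureReal_eq_sum_inter_cylL μ hA n, measureReal_eq_sum_inter_cylL μ (hA.inter hB) n,
    Finset.mul_sum]
  refine Finset.sum_le_sum fun u _ => ?_
  rw [Set.inter_right_comm]
  rcases cylL_ofFn_subset_or_inter_eq_empty hAn u with hsub | hempty
  · rw [Set.inter_eq_right.mpr hsub]
    exact hc u
  · simp [hempty]

def avoidSet (w : List (Fin k)) (m : ℕ) : Set (ℕ → Fin k) :=
  {ω | ∀ i < m, shift^[i * w.length] ω ∉ cylL w}

variable (w : List (Fin k))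

lemma avoidSet_zero : avoidSet w 0 = Set.univ := by
  simp [avoidSet]

lemma avoidSet_succ (m : ℕ) :
    avoidSet w (m + 1) = avoidSet w m \ shift^[m * w.length] ⁻¹' cylL w := by
  ext ω
  simp only [avoidSet, Set.mem_sdiff, Set.mem_preimage, Set.mem_ofPred_eq,
    Nat.forall_lt_succ_right]

lemma measurableSet_avoidSet (m : ℕ) : MeasurableSet (avoidSet w m) := by
  induction m with
  | zero => simp [avoidSet_zero]
  | succ m ih =>
    rw [avoidSet_succ]
    exact ih.diff (measurable_shift.iterate _ (measurableSet_cylL w))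

lemma dependsOn_mem_avoidSet (m : ℕ) :
    DependsOn (· ∈ avoidSet w m) (Set.Iio (m * w.length)) := by
  intro ω ω' h
  simp only [avoidSet, Set.mem_ofPred_eq]
  refine forall_congr fun i => forall_congr fun hi => congrArg Not <|
    dependsOn_mem_preimage_cylL (i * w.length) w fun j hj => h j ?_
  have : (i + 1) * w.length ≤ m * w.length := Nat.mul_le_mul_right _ hi
  simp only [Set.mem_Iio] at hj ⊢
  linarith [Nat.succ_mul i w.length]

theorem measureReal_avoidSet_le_pow (μ : Measure (ℕ → Fin k)) [IsProbabilityMeasure μ] {c : ℝ}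
    (hc : ∀ u : List (Fin k), c * μ.real (cylL u) ≤ μ.real (cylL (u ++ w))) (m : ℕ) :
    μ.real (avoidSet w m) ≤ (1 - c) ^ m := by
  have hc1 : c ≤ 1 := by simpa [cylL] using (hc []).trans measureReal_le_one
  induction m with
  | zero => simp [avoidSet_zero]
  | succ m ih =>
    set B := shift^[m * w.length] ⁻¹' cylL w
    have hB : MeasurableSet B := measurable_shift.iterate _ (measurableSet_cylL w)
    have hhit : c * μ.real (avoidSet w m) ≤ μ.real (avoidSet w m ∩ B) := by
      refine mul_measureReal_le_measureReal_inter μ (measurableSet_avoidSet w m)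
        (dependsOn_mem_avoidSet w m) hB fun u => ?_
      simpa [B, cylL_append] using hc (List.ofFn u)
    calc μ.real (avoidSet w (m + 1))
        = μ.real (avoidSet w m) - μ.real (avoidSet w m ∩ B) := by
          rw [avoidSet_succ, eq_sub_iff_add_eq, measureReal_sdiff_add_inter hB]
      _ ≤ (1 - c) * μ.real (avoidSet w m) := by linarith
      _ ≤ (1 - c) * (1 - c) ^ m := mul_le_mul_of_nonneg_left ih (sub_nonneg.mpr hc1)
      _ = (1 - c) ^ (m + 1) := (pow_succ' _ _).symm

end MarkovCylinder

open MarkovCylinder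

theorem stmt7_general {k : ℕ} (Q : Matrix (Fin k) (Fin k) ℝ)
    (hQ0 : ∀ i j, 0 ≤ Q i j)
    (p : Fin k → ℝ) (hp : ∀ i, 0 < p i)
    (ℙinv : Measure (ℕ → Fin k)) [IsProbabilityMeasure ℙinv]
    (hμ : ∀ w : List (Fin k), ℙinv (cylL w) = ENNReal.ofReal (cylW p Q w))
    (ξ₀ : Fin k) (ξt : List (Fin k))
    (ρ : ℝ) (hρ : ρ = ⨅ j : Fin k, Q j ξ₀ * chainW Q ξ₀ ξt)
    (ρ₀ : ℝ) (hρ₀ : ρ₀ = min ρ (ℙinv (cylL (ξ₀ :: ξt))).toReal)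
    (N : ℕ) (hNdef : N = (ξ₀ :: ξt).length) :
    ∀ ℓ : ℕ, 1 ≤ ℓ →
      ℙinv {ω | ∀ i < ℓ, shift^[i * N] ω ∉ cylL (ξ₀ :: ξt)} ≤
        ENNReal.ofReal ((1 - ρ₀) ^ ℓ) := by
  intro ℓ _
  subst hNdef
  have hp0 : ∀ i, 0 ≤ p i := fun i => (hp i).le
  have hreal : ∀ w, ℙinv.real (cylL w) = cylW p Q w := fun w => by
    rw [measureReal_def, hμ, ENNReal.toReal_ofReal (cylW_nonneg hQ0 hp0 w)]
  have hchain : ∀ c, ρ ≤ chainW Q c (ξ₀ :: ξt) := fun c =>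
    hρ ▸ ciInf_le (Set.finite_range _).bddBelow c
  have hhit : ∀ u, ρ₀ * ℙinv.real (cylL u) ≤ ℙinv.real (cylL (u ++ ξ₀ :: ξt)) := fun u => by
    rw [hρ₀, ← measureReal_def, hreal, hreal, hreal]
    exact min_mul_cylW_le_cylW_append hQ0 hp0 hchain u
  rw [← ofReal_measureReal]
  exact ENNReal.ofReal_le_ofReal (measureReal_avoidSet_le_pow _ ℙinv hhit ℓ)

/-- Exponential decay `ℙ⁻(Σ_ℓ^W) ≤ λ₀^ℓ` with `λ₀ = 1 - min(ρ, ℙ⁻(W))`,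
where `ρ = inf_j q_{jξ₀} q_{ξ₀ξ₁} ⋯ q_{ξ_{N-2}ξ_{N-1}}`. -/
theorem stmt7 {k : ℕ} (Q : Matrix (Fin k) (Fin k) ℝ)
    (hQ0 : ∀ i j, 0 ≤ Q i j) (hQ1 : ∀ i, ∑ j, Q i j = 1)
    (p : Fin k → ℝ) (hp : ∀ i, 0 < p i) (hpsum : ∑ i, p i = 1)
    (hstat : ∀ j, ∑ i, p i * Q i j = p j)
    (ℙinv : Measure (ℕ → Fin k)) [IsProbabilityMeasure ℙinv]
    (hμ : ∀ w : List (Fin k), ℙinv (cylL w) = ENNReal.ofReal (cylW p Q w))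
    (ξ₀ : Fin k) (ξt : List (Fin k))
    (hWpos : 0 < ℙinv (cylL (ξ₀ :: ξt)))
    (ρ : ℝ) (hρ : ρ = ⨅ j : Fin k, Q j ξ₀ * chainW Q ξ₀ ξt) (hρpos : 0 < ρ)
    (ρ₀ : ℝ) (hρ₀ : ρ₀ = min ρ (ℙinv (cylL (ξ₀ :: ξt))).toReal)
    (N : ℕ) (hNdef : N = (ξ₀ :: ξt).length) :
    ∀ ℓ : ℕ, 1 ≤ ℓ →
      ℙinv {ω | ∀ i < ℓ, shift^[i * N] ω ∉ cylL (ξ₀ :: ξt)} ≤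
        ENNReal.ofReal ((1 - ρ₀) ^ ℓ) :=
  stmt7_general Q hQ0 p hp ℙinv hμ ξ₀ ξt ρ hρ ρ₀ hρ₀ N hNdef
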